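/- arXiv:gr-qc/0309028 — 4 statements merged into one kernel-verified Lean document; each statement's English description precedes it below -/
import Mathlib

section
/- (Fricke identity) For A, B ∈ SL(2, R) over a commutative ring R, the trace of the group commutator satisfies tr(A·B·A⁻¹·B⁻¹) = tr(A)² + tr(B)² + tr(AB)² − tr(A)·tr(B)·tr(AB) − 2. -/
/-- Fricke identity: for `A, B ∈ SL(2,R)`,
`tr (A B A⁻¹ B⁻¹) = (tr A)² + (tr B)² + (tr AB)² − tr A · tr B · tr AB − 2`. -/
theorem fricke_identity {R : Type*} [CommRing R]
    (A B : Matrix.SpecialLinearGroup (Fin 2) R) :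
    ((A * B * A⁻¹ * B⁻¹ : Matrix.SpecialLinearGroup (Fin 2) R) : Matrix (Fin 2) (Fin 2) R).trace =
      ((A : Matrix (Fin 2) (Fin 2) R).trace) ^ 2 +
        ((B : Matrix (Fin 2) (Fin 2) R).trace) ^ 2 +
        (((A * B : Matrix.SpecialLinearGroup (Fin 2) R) : Matrix (Fin 2) (Fin 2) R).trace) ^ 2 -
        (A : Matrix (Fin 2) (Fin 2) R).trace * (B : Matrix (Fin 2) (Fin 2) R).trace *
          ((A * B : Matrix.SpecialLinearGroup (Fin 2) R) : Matrix (Fin 2) (Fin 2) R).trace - 2 := by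
  have hA : Matrix.det (A : Matrix (Fin 2) (Fin 2) R) = 1 := A.2
  have hB : Matrix.det (B : Matrix (Fin 2) (Fin 2) R) = 1 := B.2
  rw [Matrix.det_fin_two] at hA hB
  simp only [Matrix.SpecialLinearGroup.coe_mul, Matrix.coe_units_inv,
    Matrix.SpecialLinearGroup.coe_inv, Matrix.adjugate_fin_two,
    Matrix.trace_fin_two, Matrix.mul_apply, Fin.sum_univ_two,
    Matrix.of_apply, Matrix.cons_val', Matrix.cons_val_zero, Matrix.cons_val_one,
    Matrix.head_cons, Matrix.head_fin_const, Matrix.empty_val', Matrix.cons_val_fin_one]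
  linear_combination (norm := ring)
    ((B.1 0 0 + B.1 1 1)^2 - 2) * hA +
    ((A.1 0 0)^2 + (A.1 1 1)^2 + 2 * A.1 0 1 * A.1 1 0) * hB
end

section
/- For A, B ∈ SL(2, ℂ), the determinant of the additive commutator equals det(AB − BA) = 2 − tr(A·B·A⁻¹·B⁻¹). -/
/-- For `A, B ∈ SL(2,ℂ)`, `det (AB − BA) = 2 − tr (A B A⁻¹ B⁻¹)`. -/
theorem det_commutator_eq_two_sub_trace_group_commutator
    (A B : Matrix.SpecialLinearGroup (Fin 2) ℂ) :
    ((A : Matrix (Fin 2) (Fin 2) ℂ) * (B : Matrix (Fin 2) (Fin 2) ℂ) -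
        (B : Matrix (Fin 2) (Fin 2) ℂ) * (A : Matrix (Fin 2) (Fin 2) ℂ)).det =
      2 - ((A * B * A⁻¹ * B⁻¹ : Matrix.SpecialLinearGroup (Fin 2) ℂ) :
        Matrix (Fin 2) (Fin 2) ℂ).trace := by
  have hA : ((A : Matrix (Fin 2) (Fin 2) ℂ)).det = 1 := A.2
  have hB : ((B : Matrix (Fin 2) (Fin 2) ℂ)).det = 1 := B.2
  rw [Matrix.det_fin_two] at hA hB
  simp only [Matrix.SpecialLinearGroup.coe_mul, Matrix.SpecialLinearGroup.coe_inv,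
    Matrix.adjugate_fin_two, Matrix.det_fin_two, Matrix.trace_fin_two, Matrix.mul_apply,
    Fin.sum_univ_two, Matrix.sub_apply, Matrix.of_apply, Matrix.cons_val', Matrix.cons_val_zero,
    Matrix.cons_val_one, Matrix.head_cons, Matrix.empty_val', Matrix.cons_val_fin_one,
    Matrix.head_fin_const]

  linear_combination (2 * (B 0 0 * B 1 1) - 2 * (B 0 1 * B 1 0)) * hA + 2 * hB
end

section
/- Let X = (X₁, X₂, X₃) ∈ ℂ³ with X₁² ≠ 1, let r be a square root of X₁² − 1, set Δ = X₁X₂ − X₃ and Θ = (X₃ − X₁X₂)² − (X₁² − 1)(X₂² − 1). Define s₁ = diag(X₁ + r, X₁ − r) and s₂ = [[X₂ − Δ/r, 1], [−Θ/(X₁² − 1), X₂ + Δ/r]]. Then det(s₁) = det(s₂) = 1, ½tr(s₁) = X₁, ½tr(s₂) = X₂, and ½tr(s₁s₂) = X₃. -/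
/-- Explicit gauge-fixing section: for `X₁² ≠ 1` and `r² = X₁² − 1`, the matrices
`s₁ = diag(X₁+r, X₁−r)` and `s₂ = [[X₂ − Δ/r, 1], [−Θ/(X₁²−1), X₂ + Δ/r]]` have
determinant 1 and half-traces `X₁`, `X₂`, `X₃`. -/
theorem gauge_fixing_section (X₁ X₂ X₃ r : ℂ) (hX : X₁ ^ 2 ≠ 1) (hr : r ^ 2 = X₁ ^ 2 - 1) :
    let Δ := X₁ * X₂ - X₃
    let Θ := (X₃ - X₁ * X₂) ^ 2 - (X₁ ^ 2 - 1) * (X₂ ^ 2 - 1)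
    let s₁ : Matrix (Fin 2) (Fin 2) ℂ := Matrix.diagonal ![X₁ + r, X₁ - r]
    let s₂ : Matrix (Fin 2) (Fin 2) ℂ :=
      !![X₂ - Δ / r, 1; -Θ / (X₁ ^ 2 - 1), X₂ + Δ / r]
    s₁.det = 1 ∧ s₂.det = 1 ∧
      s₁.trace / 2 = X₁ ∧ s₂.trace / 2 = X₂ ∧ (s₁ * s₂).trace / 2 = X₃ := by
  intro Δ Θ s₁ s₂
  have hX' : X₁ ^ 2 - 1 ≠ 0 := sub_ne_zero.mpr hX
  have hr0 : r ≠ 0 := by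
    intro h; apply hX'; rw [← hr, h]; ring
  have hd1 : s₁ = !![X₁ + r, 0; 0, X₁ - r] := by
    simp [s₁, Matrix.diagonal]
    ext i j
    fin_cases i <;> fin_cases j <;> simp [Matrix.diagonal]
  refine ⟨?_, ?_, ?_, ?_, ?_⟩
  · rw [hd1, Matrix.det_fin_two_of]
    have : (X₁ + r) * (X₁ - r) = X₁ ^ 2 - r ^ 2 := by ring
    rw [this, hr]; ring
  · rw [show s₂ = !![X₂ - Δ / r, 1; -Θ / (X₁ ^ 2 - 1), X₂ + Δ / r] from rfl,
      Matrix.det_fin_two_of]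
    have hr2 : r * r = X₁ ^ 2 - 1 := by rw [← hr]; ring
    field_simp [Δ, Θ]
    ring_nf
    rw [show r ^ 2 = r * r from sq r, hr2]
    ring
  · rw [hd1]; simp [Matrix.trace_fin_two_of]
  · simp [s₂, Matrix.trace_fin_two_of]
  · rw [hd1]
    show (!![X₁ + r, 0; 0, X₁ - r] * !![X₂ - Δ / r, 1; -Θ / (X₁ ^ 2 - 1), X₂ + Δ / r]).trace / 2 = X₃
    rw [Matrix.mul_fin_two, Matrix.trace_fin_two_of]
    field_simp [Δ]
    ring
end

section
/- Let Γ be a finite connected directed multigraph with edge set E (of size |E|) and vertex set V (of size |V|), with source and target maps s, t : E → V, and let G be a group. The gauge group G^V acts on G^E by ((k_v)·(g_e))_e = k_{s(e)}⁻¹ · g_e · k_{t(e)}. Then the quotient set G^E / G^V is in bijection with G^{|E| − |V| + 1} / Ad(G), where Ad(G) acts diagonally by simultaneous conjugation: g·(g₁,…,g_h) = (g g₁ g⁻¹, …, g g_h g⁻¹). -/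
open Relation

universe u v w

/-- Gauge relation on `E → G`. -/
abbrev Rgauge {E : Type u} {V : Type v} (s t : E → V) (G : Type w) [Group G] :
    (E → G) → (E → G) → Prop :=
  fun x y => ∃ k : V → G, ∀ e, y e = (k (s e))⁻¹ * x e * k (t e)

/-- Diagonal conjugation relation. -/
abbrev Rconj (I : Type u) (G : Type w) [Group G] : (I → G) → (I → G) → Prop :=
  fun x y => ∃ g : G, ∀ i, y i = g * x i * g⁻¹

section Contract

variable {E : Type u} {V : Type v} [DecidableEq E] [DecidableEq V]
variable (s t : E → V) (e₀ : E) (hne : s e₀ ≠ t e₀)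

/-- Projection to the contracted vertex set. -/
def pV (v : V) : {v : V // v ≠ t e₀} :=
  if h : v = t e₀ then ⟨s e₀, hne⟩ else ⟨v, h⟩

@[simp] lemma pV_te : pV s t e₀ hne (t e₀) = ⟨s e₀, hne⟩ := dif_pos rfl

lemma pV_of_ne {v : V} (h : v ≠ t e₀) : pV s t e₀ hne v = ⟨v, h⟩ := dif_neg h

@[simp] lemma pV_se : pV s t e₀ hne (s e₀) = ⟨s e₀, hne⟩ := dif_neg hne

/-- Contracted source map. -/
def sC (e : {e : E // e ≠ e₀}) : {v : V // v ≠ t e₀} := pV s t e₀ hne (s e.1)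

/-- Contracted target map. -/
def tC (e : {e : E // e ≠ e₀}) : {v : V // v ≠ t e₀} := pV s t e₀ hne (t e.1)

variable {G : Type w} [Group G]

/-- Gauge-fixing factor. -/
def cf (x : E → G) (v : V) : G := if v = t e₀ then (x e₀)⁻¹ else 1

/-- Contraction map on configurations. -/
def Phi (x : E → G) (e : {e : E // e ≠ e₀}) : G :=
  (cf t e₀ x (s e.1))⁻¹ * x e.1 * cf t e₀ x (t e.1)

/-- Section of the contraction map. -/
def Psi (x' : {e : E // e ≠ e₀} → G) (e : E) : G :=
  if h : e = e₀ then 1 else x' ⟨e, h⟩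

lemma key1 (k : V → G) (x y : E → G)
    (hy : ∀ e, y e = (k (s e))⁻¹ * x e * k (t e)) (v : V) :
    k v * cf t e₀ y v = cf t e₀ x v * k (pV s t e₀ hne v).1 := by
  by_cases h : v = t e₀
  · subst h
    rw [show cf t e₀ y (t e₀) = (y e₀)⁻¹ from if_pos rfl,
      show cf t e₀ x (t e₀) = (x e₀)⁻¹ from if_pos rfl, pV_te, hy e₀]
    group
  · simp only [cf, if_neg h, pV_of_ne s t e₀ hne h, mul_one, one_mul]

lemma phi_descend (x y : E → G) (h : Rgauge s t G x y) :
    Rgauge (sC s t e₀ hne) (tC s t e₀ hne) G (Phi s t e₀ x) (Phi s t e₀ y) := by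
  obtain ⟨k, hy⟩ := h
  refine ⟨fun v => k v.1, fun e => ?_⟩
  have h1 := key1 s t e₀ hne k x y hy (s e.1)
  have h2 := key1 s t e₀ hne k x y hy (t e.1)
  have e1 : k ((pV s t e₀ hne (s e.1)).1) = (cf t e₀ x (s e.1))⁻¹ * (k (s e.1) * cf t e₀ y (s e.1)) := by
    rw [h1]; group
  have e2 : k ((pV s t e₀ hne (t e.1)).1) = (cf t e₀ x (t e.1))⁻¹ * (k (t e.1) * cf t e₀ y (t e.1)) := by
    rw [h2]; group
  simp only [Phi, sC, tC, e1, e2, hy e.1]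
  group

lemma psi_descend (x' y' : {e : E // e ≠ e₀} → G)
    (h : Rgauge (sC s t e₀ hne) (tC s t e₀ hne) G x' y') :
    Rgauge s t G (Psi e₀ x') (Psi e₀ y') := by
  obtain ⟨k', hy⟩ := h
  refine ⟨fun v => k' (pV s t e₀ hne v), fun e => ?_⟩
  by_cases h : e = e₀
  · rw [h, show Psi (G := G) e₀ y' e₀ = 1 from dif_pos rfl,
      show Psi (G := G) e₀ x' e₀ = 1 from dif_pos rfl]
    simp only [pV_te, pV_se]
    group
  · simpa only [Psi, dif_neg h, sC, tC] using hy ⟨e, h⟩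

lemma phi_psi (x' : {e : E // e ≠ e₀} → G) : Phi s t e₀ (Psi e₀ x') = x' := by
  funext e
  have hcf : ∀ v, cf t e₀ (Psi (G := G) e₀ x') v = 1 := by
    intro v; simp [cf, Psi]
  simp [Phi, hcf, Psi, dif_neg e.2]

include hne in
lemma psi_phi (x : E → G) :
    Psi e₀ (Phi s t e₀ x) = fun e => (cf t e₀ x (s e))⁻¹ * x e * cf t e₀ x (t e) := by
  funext e
  by_cases h : e = e₀
  · rw [h, show Psi (G := G) e₀ (Phi s t e₀ x) e₀ = 1 from dif_pos rfl,
      show cf t e₀ x (s e₀) = 1 from if_neg hne,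
      show cf t e₀ x (t e₀) = (x e₀)⁻¹ from if_pos rfl]
    group
  · simp [Psi, dif_neg h, Phi]

/-- The contraction equivalence of quotients. -/
lemma contract_equiv :
    Nonempty (Quot (Rgauge s t G) ≃ Quot (Rgauge (sC s t e₀ hne) (tC s t e₀ hne) G)) := by
  refine ⟨⟨Quot.lift (fun x => Quot.mk _ (Phi s t e₀ x))
      (fun x y h => Quot.sound (phi_descend s t e₀ hne x y h)),
    Quot.lift (fun x' => Quot.mk _ (Psi e₀ x'))
      (fun x y h => Quot.sound (psi_descend s t e₀ hne x y h)), ?_, ?_⟩⟩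
  · intro q
    induction q using Quot.ind with
    | _ x =>
      simp only [Quot.lift_mk, psi_phi s t e₀ hne x]
      exact (Quot.sound ⟨cf t e₀ x, fun e => rfl⟩).symm
  · intro q
    induction q using Quot.ind with
    | _ x' =>
      simp only [Quot.lift_mk, phi_psi s t e₀ x']

lemma conn_contract
    (hconn : ∀ a b : V,
      ReflTransGen (fun a b => ∃ e : E, (s e = a ∧ t e = b) ∨ (s e = b ∧ t e = a)) a b)
    (a b : {v : V // v ≠ t e₀}) :
    ReflTransGen (fun a b => ∃ e : {e : E // e ≠ e₀},
      (sC s t e₀ hne e = a ∧ tC s t e₀ hne e = b) ∨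
      (sC s t e₀ hne e = b ∧ tC s t e₀ hne e = a)) a b := by
  have map : ∀ {u v : V},
      ReflTransGen (fun a b => ∃ e : E, (s e = a ∧ t e = b) ∨ (s e = b ∧ t e = a)) u v →
      ReflTransGen (fun a b => ∃ e : {e : E // e ≠ e₀},
        (sC s t e₀ hne e = a ∧ tC s t e₀ hne e = b) ∨
        (sC s t e₀ hne e = b ∧ tC s t e₀ hne e = a))
        (pV s t e₀ hne u) (pV s t e₀ hne v) := by
    intro u v h
    induction h with
    | refl => exact ReflTransGen.refl
    | tail _ hbc ih =>
      refine ih.trans ?_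
      obtain ⟨e, he⟩ := hbc
      by_cases h0 : e = e₀
      · rw [h0] at he
        have : pV s t e₀ hne (s e₀) = pV s t e₀ hne (t e₀) := by simp
        rcases he with ⟨h1, h2⟩ | ⟨h1, h2⟩ <;> rw [← h1, ← h2]
        · rw [this]
        · rw [← this]
      · refine ReflTransGen.single ⟨⟨e, h0⟩, ?_⟩
        rcases he with ⟨h1, h2⟩ | ⟨h1, h2⟩
        · exact Or.inl ⟨by rw [sC, h1], by rw [tC, h2]⟩
        · exact Or.inr ⟨by rw [sC, h1], by rw [tC, h2]⟩
  have := map (hconn a.1 b.1)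
  rwa [pV_of_ne s t e₀ hne a.2, pV_of_ne s t e₀ hne b.2, Subtype.eta, Subtype.eta] at this

end Contract

section Base

lemma base_equiv {E : Type u} {V : Type v} [Fintype E] [Fintype V] [Nonempty V]
    (s t : E → V) (hV : Fintype.card V = 1) (G : Type w) [Group G] :
    Nonempty (Quot (Rgauge s t G) ≃
      Quot (Rconj (Fin (Fintype.card E + 1 - Fintype.card V)) G)) := by
  haveI : Subsingleton V := Fintype.card_le_one_iff_subsingleton.mp (by omega)
  have hc : Fintype.card E = Fintype.card E + 1 - Fintype.card V := by omega
  let σ : E ≃ Fin (Fintype.card E + 1 - Fintype.card V) := Fintype.equivFinOfCardEq hc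
  obtain ⟨v₀⟩ := ‹Nonempty V›
  refine ⟨⟨Quot.lift (fun x => Quot.mk _ (fun i => x (σ.symm i))) ?_,
    Quot.lift (fun y => Quot.mk _ (fun e => y (σ e))) ?_, ?_, ?_⟩⟩
  · rintro x y ⟨k, hy⟩
    refine Quot.sound ⟨(k v₀)⁻¹, fun i => ?_⟩
    show y (σ.symm i) = (k v₀)⁻¹ * x (σ.symm i) * (k v₀)⁻¹⁻¹
    rw [hy (σ.symm i), Subsingleton.elim (s (σ.symm i)) v₀, Subsingleton.elim (t (σ.symm i)) v₀,
      inv_inv]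
  · rintro x y ⟨g, hy⟩
    refine Quot.sound ⟨fun _ => g⁻¹, fun e => ?_⟩
    show y (σ e) = (g⁻¹)⁻¹ * x (σ e) * g⁻¹
    rw [hy (σ e), inv_inv]
  · intro q
    induction q using Quot.ind with
    | _ x =>
      simp only [Quot.lift_mk]
      congr 1
      funext e
      rw [Equiv.symm_apply_apply]
  · intro q
    induction q using Quot.ind with
    | _ y =>
      simp only [Quot.lift_mk]
      congr 1
      funext i
      rw [Equiv.apply_symm_apply]

end Base

lemma exists_ne_edge {E : Type u} {V : Type v} [Fintype V] (s t : E → V)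
    (hV : 1 < Fintype.card V)
    (hconn : ∀ a b : V,
      ReflTransGen (fun a b => ∃ e : E, (s e = a ∧ t e = b) ∨ (s e = b ∧ t e = a)) a b) :
    ∃ e : E, s e ≠ t e := by
  obtain ⟨a, b, hab⟩ := Fintype.exists_pair_of_one_lt_card hV
  have aux : ∀ {a b : V},
      ReflTransGen (fun a b => ∃ e : E, (s e = a ∧ t e = b) ∨ (s e = b ∧ t e = a)) a b →
      a ≠ b → ∃ e : E, s e ≠ t e := by
    intro a b h
    induction h with
    | refl => exact fun h => absurd rfl h
    | @tail c d _ hcd ih =>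
      intro had
      by_cases h : c = d
      · exact ih (h ▸ had)
      · obtain ⟨e, he⟩ := hcd
        rcases he with ⟨h1, h2⟩ | ⟨h1, h2⟩
        · exact ⟨e, by rw [h1, h2]; exact h⟩
        · exact ⟨e, by rw [h1, h2]; exact Ne.symm h⟩
  exact aux (hconn a b) hab

lemma key (n : ℕ) : ∀ (E : Type u) (V : Type v) [Fintype E] [Fintype V] [Nonempty V]
    [DecidableEq E] [DecidableEq V] (s t : E → V), Fintype.card V = n →
    (∀ a b : V,
      ReflTransGen (fun a b => ∃ e : E, (s e = a ∧ t e = b) ∨ (s e = b ∧ t e = a)) a b) →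
    ∀ (G : Type w) [Group G],
    Nonempty (Quot (Rgauge s t G) ≃
      Quot (Rconj (Fin (Fintype.card E + 1 - Fintype.card V)) G)) := by
  induction n with
  | zero =>
    intro E V _ _ _ _ _ s t hV _ G _
    exact absurd (Fintype.card_pos (α := V)) (by omega)
  | succ n ih =>
    intro E V _ _ _ _ _ s t hV hconn G _
    rcases Nat.eq_zero_or_pos n with hn | hn
    · exact base_equiv s t (show Fintype.card V = 1 by omega) G
    · obtain ⟨e₀, hne⟩ := exists_ne_edge s t (show 1 < Fintype.card V by omega) hconn
      obtain ⟨C⟩ := contract_equiv s t e₀ hne (G := G)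
      haveI : Nonempty {v : V // v ≠ t e₀} := ⟨⟨s e₀, hne⟩⟩
      have hE : Fintype.card {e : E // e ≠ e₀} = Fintype.card E - 1 := by
        simp [Fintype.card_subtype_compl, Fintype.card_subtype_eq]
      have hV' : Fintype.card {v : V // v ≠ t e₀} = n := by
        simp [Fintype.card_subtype_compl, Fintype.card_subtype_eq, hV]
      have hEpos : 0 < Fintype.card E := Fintype.card_pos_iff.mpr ⟨e₀⟩
      obtain ⟨D⟩ := ih {e : E // e ≠ e₀} {v : V // v ≠ t e₀} (sC s t e₀ hne) (tC s t e₀ hne)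
        hV' (conn_contract s t e₀ hne hconn) G
      have hcard : Fintype.card {e : E // e ≠ e₀} + 1 - Fintype.card {v : V // v ≠ t e₀}
          = Fintype.card E + 1 - Fintype.card V := by omega
      exact ⟨C.trans (hcard ▸ D)⟩

/-- For a finite connected directed multigraph `Γ = (E, V, s, t)` and a group `G`,
the quotient of `G^E` by the gauge action of `G^V` is in bijection with the quotient of
`G^(|E| − |V| + 1)` by diagonal conjugation. -/
theorem gauge_quotient_equiv_flower
    (E V : Type*) [Fintype E] [Fintype V] [Nonempty V]
    (s t : E → V)
    (hconn : ∀ a b : V,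
      Relation.ReflTransGen
        (fun a b => ∃ e : E, (s e = a ∧ t e = b) ∨ (s e = b ∧ t e = a)) a b)
    (G : Type*) [Group G] :
    Nonempty
      (Quot (fun x y : E → G => ∃ k : V → G, ∀ e, y e = (k (s e))⁻¹ * x e * k (t e)) ≃
        Quot (fun x y : Fin (Fintype.card E + 1 - Fintype.card V) → G =>
          ∃ g : G, ∀ i, y i = g * x i * g⁻¹)) := by
  haveI := Classical.decEq E
  haveI := Classical.decEq V
  exact key (Fintype.card V) E V s t rfl hconn G
end
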